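/- Let G be a 2P₇-free graph and let x₁x₂…x₁₃ be a path in G on 13 distinct vertices. If there is a vertex y outside {x₁,…,x₁₃} that has a neighbor outside {x₁,…,x₁₃} and is adjacent to exactly one vertex of the path, then the number of edges of G with both endpoints in {x₁,…,x₁₃} is at most 68. -/

import Mathlib

open SimpleGraph

/-- `H` is contained in `G` as a subgraph, i.e. there is an injective graph
homomorphism from `H` to `G` (a copy of `H` in `G`). -/
def Contains {α β : Type*} (H : SimpleGraph α) (G : SimpleGraph β) : Prop :=
  ∃ f : H →g G, Function.Injective f

/-- `2P₇`: the disjoint union of two copies of the path on 7 vertices. -/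
def TwoP7 : SimpleGraph (Fin 7 ⊕ Fin 7) :=
  SimpleGraph.pathGraph 7 ⊕g SimpleGraph.pathGraph 7

/-!
Let `x j` be the neighbour of `y` on the path and `z` a neighbour of `y` off it. Prolonged by
`z y`, any 5-vertex path starting at `x j` becomes a `P₇`, so the graph induced on the path
has no 5-vertex path starting at `x j` that is disjoint from a 7-vertex path. Up to reversing
the path, `j ≤ 6`. For `j ∈ {0, 1, 4, 5}` the path itself contains such a pair. For
`j ∈ {2, 3, 6}` we list at least ten pairwise disjoint sets of at most two chords, each of
which would complete such a pair together with the path edges; so each set contains a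
non-edge, leaving at most `78 - 10` edges.
-/

open Finset Function

namespace SimpleGraph

instance (n : ℕ) : DecidableRel (pathGraph n).Adj :=
  fun _ _ => decidable_of_iff _ pathGraph_adj.symm

theorem comap_rev_pathGraph (n : ℕ) : (pathGraph n).comap Fin.rev = pathGraph n := by
  ext i k
  simp only [comap_adj, pathGraph_adj, Fin.val_rev]
  omega

section Walks

variable {V α : Type*} {G H : SimpleGraph V}

def IsWalkTuple (G : SimpleGraph V) {n : ℕ} (p : Fin (n + 1) → V) : Prop :=
  ∀ i : Fin n, G.Adj (p i.castSucc) (p i.succ)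

instance {n : ℕ} [DecidableRel G.Adj] (p : Fin (n + 1) → V) : Decidable (G.IsWalkTuple p) :=
  by unfold IsWalkTuple; infer_instance

namespace IsWalkTuple

variable {n : ℕ} {p : Fin (n + 1) → V}

theorem mono (h : G ≤ H) (hp : G.IsWalkTuple p) : H.IsWalkTuple p :=
  fun i => h (hp i)

theorem cons {v : V} (hv : G.Adj v (p 0)) (hp : G.IsWalkTuple p) :
    G.IsWalkTuple (Fin.cons v p : Fin (n + 2) → V) := by
  intro i
  cases i using Fin.cases with
  | zero => simpa using hv
  | succ i => simpa [← Fin.succ_castSucc] using hp i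

theorem pathGraph_le_comap (hp : G.IsWalkTuple p) : pathGraph (n + 1) ≤ G.comap p := by
  have step (i k : Fin (n + 1)) (h : i.val + 1 = k.val) : G.Adj (p i) (p k) := by
    convert hp ⟨i, by omega⟩ using 2 <;> ext <;> simp [h]
  intro i k h
  rcases pathGraph_adj.mp h with h | h
  exacts [step i k h, (step k i h).symm]

end IsWalkTuple

theorem contains_twoP7_of_isWalkTuple {p q : Fin 7 → V} (hp : G.IsWalkTuple p)
    (hq : G.IsWalkTuple q) (hpq : Injective (Sum.elim p q)) : Contains TwoP7 G := by
  refine ⟨⟨Sum.elim p q, ?_⟩, hpq⟩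
  rintro (i | i) (k | k) h
  · exact hp.pathGraph_le_comap (sum_adj_inl.mp h)
  · simp [TwoP7] at h
  · simp [TwoP7] at h
  · exact hq.pathGraph_le_comap (sum_adj_inr.mp h)

theorem contains_twoP7_of_isWalkTuple_cons_cons {a : Fin 5 → V} {b : Fin 7 → V} {y z : V}
    (hzy : G.Adj z y) (hya : G.Adj y (a 0)) (ha : G.IsWalkTuple a) (hb : G.IsWalkTuple b)
    (hab : Injective (Sum.elim a b)) (hy : y ∉ Set.range (Sum.elim a b))
    (hz : z ∉ Set.range (Sum.elim a b)) : Contains TwoP7 G := by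
  simp only [Set.mem_range, Sum.exists, Sum.elim_inl, Sum.elim_inr, not_or, not_exists] at hy hz
  have hya_inj : Injective (Fin.cons y a : Fin 6 → V) :=
    Fin.cons_injective_iff.mpr ⟨by simpa using hy.1, hab.comp Sum.inl_injective⟩
  have hzya_inj : Injective (Fin.cons z (Fin.cons y a) : Fin 7 → V) :=
    Fin.cons_injective_iff.mpr ⟨by simp [Fin.range_cons, hzy.ne, hz.1], hya_inj⟩
  refine contains_twoP7_of_isWalkTuple ((ha.cons hya).cons hzy) hb
    (hzya_inj.sumElim (hab.comp Sum.inr_injective) fun i k => ?_)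
  cases i using Fin.cases with
  | zero => exact fun h => hz.2 k h.symm
  | succ i =>
    cases i using Fin.cases with
    | zero => exact fun h => hy.2 k h.symm
    | succ i => exact hab.ne Sum.inl_ne_inr (a₁ := .inl i) (a₂ := .inr k)

def IsAnchoredP5P7 (H : SimpleGraph V) (j : V) (a : Fin 5 → V) (b : Fin 7 → V) : Prop :=
  a 0 = j ∧ H.IsWalkTuple a ∧ H.IsWalkTuple b ∧ Injective (Sum.elim a b)

instance [DecidableEq V] [DecidableRel H.Adj] {j : V} {a : Fin 5 → V} {b : Fin 7 → V} :
    Decidable (H.IsAnchoredP5P7 j a b) := by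
  unfold IsAnchoredP5P7; infer_instance

def HasAnchoredP5P7 (H : SimpleGraph V) (j : V) : Prop :=
  ∃ a b, H.IsAnchoredP5P7 j a b

theorem HasAnchoredP5P7.mono {j : V} (h : G ≤ H) : G.HasAnchoredP5P7 j → H.HasAnchoredP5P7 j :=
  fun ⟨a, b, ha0, ha, hb, hab⟩ => ⟨a, b, ha0, ha.mono h, hb.mono h, hab⟩

theorem HasAnchoredP5P7.of_comap {f : α → V} (hf : Injective f) {j : α} :
    (G.comap f).HasAnchoredP5P7 j → G.HasAnchoredP5P7 (f j) :=
  fun ⟨a, b, ha0, ha, hb, hab⟩ =>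
    ⟨f ∘ a, f ∘ b, congrArg f ha0, ha, hb, Sum.comp_elim f a b ▸ hf.comp hab⟩

theorem contains_twoP7_of_hasAnchoredP5P7_comap {x : α → V} (hx : Injective x) {j : α} {y z : V}
    (hzy : G.Adj z y) (hyj : G.Adj y (x j)) (hy : y ∉ Set.range x) (hz : z ∉ Set.range x)
    (h : (G.comap x).HasAnchoredP5P7 j) : Contains TwoP7 G := by
  obtain ⟨a, b, rfl, ha, hb, hab⟩ := h
  have hrange : Set.range (Sum.elim (x ∘ a) (x ∘ b)) ⊆ Set.range x := by
    rw [← Sum.comp_elim]; exact Set.range_comp_subset_range _ _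
  exact contains_twoP7_of_isWalkTuple_cons_cons (a := x ∘ a) (b := x ∘ b) hzy hyj ha hb
    (Sum.comp_elim x a b ▸ hx.comp hab)
    (fun h => hy (hrange h)) (fun h => hz (hrange h))

theorem ncard_edges_in_range_le_ncard_edgeSet_comap [Finite α] (x : α → V) :
    {e : Sym2 V | e ∈ G.edgeSet ∧ ∀ v ∈ e, v ∈ Set.range x}.ncard ≤
      (G.comap x).edgeSet.ncard := by
  have hsub : {e : Sym2 V | e ∈ G.edgeSet ∧ ∀ v ∈ e, v ∈ Set.range x} ⊆
      Sym2.map x '' (G.comap x).edgeSet := by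
    rintro e ⟨he, hrange⟩
    induction e using Sym2.ind with
    | _ u v =>
      obtain ⟨i, rfl⟩ := hrange u (Sym2.mem_mk_left u v)
      obtain ⟨k, rfl⟩ := hrange _ (Sym2.mem_mk_right _ _)
      exact ⟨s(i, k), he, rfl⟩
  exact (Set.ncard_le_ncard hsub (Set.toFinite _)).trans (Set.ncard_image_le (Set.toFinite _))

end Walks

-- Valid at `j`, it shows that its `chords` are not all edges of a graph that contains the path
-- but no 5-vertex path from `j` disjoint from a 7-vertex path.
structure AnchoredCertificate (n : ℕ) where
  anchoredPath : Fin 5 → Fin n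
  otherPath : Fin 7 → Fin n
  chords : Finset (Sym2 (Fin n))

namespace AnchoredCertificate

variable {n : ℕ} {H : SimpleGraph (Fin n)} {j : Fin n}

def IsValid (c : AnchoredCertificate n) (j : Fin n) : Prop :=
  (pathGraph n ⊔ fromEdgeSet c.chords).IsAnchoredP5P7 j c.anchoredPath c.otherPath

instance (c : AnchoredCertificate n) : Decidable (c.IsValid j) := by
  unfold IsValid; infer_instance

theorem exists_chord_not_mem_edgeSet {c : AnchoredCertificate n} (hc : c.IsValid j)
    (hpath : pathGraph n ≤ H) (hfree : ¬H.HasAnchoredP5P7 j) :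
    ∃ e ∈ c.chords, ¬e.IsDiag ∧ e ∉ H.edgeSet := by
  by_contra! h
  have hchords : fromEdgeSet c.chords ≤ H :=
    (fromEdgeSet_le H).mpr fun e ⟨he, hdiag⟩ => h e he hdiag
  exact hfree (HasAnchoredP5P7.mono (sup_le hpath hchords) ⟨_, _, hc⟩)

theorem card_edgeFinset_le [DecidableRel H.Adj] (hpath : pathGraph n ≤ H)
    (hfree : ¬H.HasAnchoredP5P7 j) {k : ℕ} (c : Fin k → AnchoredCertificate n)
    (hc : ∀ i, (c i).IsValid j)
    (hdisj : ∀ i i', i ≠ i' → Disjoint (c i).chords (c i').chords) :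
    #H.edgeFinset ≤ n.choose 2 - k := by
  set nonEdges := (⊤ : SimpleGraph (Fin n)).edgeFinset \ H.edgeFinset
  have hk : k ≤ #nonEdges := by
    have := card_le_card_biUnion (s := univ) (f := fun i => (c i).chords ∩ nonEdges)
      (fun i _ i' _ hii' => (hdisj _ _ hii').mono inter_subset_left inter_subset_left)
      (fun i _ => by
        obtain ⟨e, he, hdiag, hH⟩ := exists_chord_not_mem_edgeSet (hc i) hpath hfree
        have : e ∈ nonEdges := by simpa [nonEdges, edgeSet_top] using ⟨hdiag, hH⟩
        exact ⟨e, mem_inter.mpr ⟨he, this⟩⟩)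
    simpa using this.trans (card_le_card (biUnion_subset.mpr fun i _ => inter_subset_right))
  have htop : #(⊤ : SimpleGraph (Fin n)).edgeFinset = n.choose 2 := by
    rw [card_edgeFinset_top_eq_card_choose_two, Fintype.card_fin]
  have hsub : H.edgeFinset ⊆ (⊤ : SimpleGraph (Fin n)).edgeFinset := edgeFinset_mono le_top
  have hcard : #nonEdges = n.choose 2 - #H.edgeFinset := by
    rw [← htop]; exact card_sdiff_of_subset hsub
  have := card_le_card hsub
  omega

end AnchoredCertificate

def certificatesAtTwo : Fin 10 → AnchoredCertificate 13 :=
  ![⟨![2, 3, 4, 5, 6], ![1, 0, 7, 8, 9, 10, 11], {s(0, 7)}⟩,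
    ⟨![2, 3, 4, 5, 6], ![1, 0, 8, 9, 10, 11, 12], {s(0, 8)}⟩,
    ⟨![2, 3, 4, 5, 6], ![1, 0, 11, 10, 9, 8, 7], {s(0, 11)}⟩,
    ⟨![2, 3, 4, 5, 6], ![1, 0, 12, 11, 10, 9, 8], {s(0, 12)}⟩,
    ⟨![2, 3, 4, 5, 6], ![0, 1, 7, 8, 9, 10, 11], {s(1, 7)}⟩,
    ⟨![2, 3, 4, 5, 6], ![0, 1, 8, 9, 10, 11, 12], {s(1, 8)}⟩,
    ⟨![2, 3, 4, 5, 6], ![0, 1, 11, 10, 9, 8, 7], {s(1, 11)}⟩,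
    ⟨![2, 3, 4, 5, 6], ![0, 1, 12, 11, 10, 9, 8], {s(1, 12)}⟩,
    ⟨![2, 3, 4, 5, 6], ![8, 9, 0, 1, 10, 11, 12], {s(0, 9), s(1, 10)}⟩,
    ⟨![2, 3, 4, 5, 6], ![8, 9, 1, 0, 10, 11, 12], {s(1, 9), s(0, 10)}⟩]

def certificatesAtThree : Fin 10 → AnchoredCertificate 13 :=
  ![⟨![3, 4, 5, 6, 7], ![0, 1, 2, 8, 9, 10, 11], {s(2, 8)}⟩,
    ⟨![3, 4, 5, 6, 7], ![0, 1, 2, 9, 10, 11, 12], {s(2, 9)}⟩,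
    ⟨![3, 4, 5, 6, 7], ![0, 1, 2, 11, 10, 9, 8], {s(2, 11)}⟩,
    ⟨![3, 4, 5, 6, 7], ![0, 1, 2, 12, 11, 10, 9], {s(2, 12)}⟩,
    ⟨![3, 4, 5, 6, 7], ![0, 1, 8, 9, 10, 11, 12], {s(1, 8)}⟩,
    ⟨![3, 4, 5, 6, 7], ![0, 1, 12, 11, 10, 9, 8], {s(1, 12)}⟩,
    ⟨![3, 4, 5, 6, 7], ![1, 0, 8, 9, 10, 11, 12], {s(0, 8)}⟩,
    ⟨![3, 4, 5, 6, 7], ![2, 1, 0, 9, 10, 11, 12], {s(0, 9)}⟩,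
    ⟨![3, 4, 5, 6, 7], ![2, 1, 0, 11, 10, 9, 8], {s(0, 11)}⟩,
    ⟨![3, 4, 5, 6, 7], ![1, 0, 12, 11, 10, 9, 8], {s(0, 12)}⟩]

def certificatesAtSix : Fin 12 → AnchoredCertificate 13 :=
  ![⟨![6, 5, 4, 3, 2], ![1, 0, 7, 8, 9, 10, 11], {s(0, 7)}⟩,
    ⟨![6, 5, 4, 3, 2], ![1, 0, 8, 9, 10, 11, 12], {s(0, 8)}⟩,
    ⟨![6, 5, 4, 3, 2], ![1, 0, 11, 10, 9, 8, 7], {s(0, 11)}⟩,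
    ⟨![6, 5, 4, 3, 2], ![1, 0, 12, 11, 10, 9, 8], {s(0, 12)}⟩,
    ⟨![6, 5, 4, 3, 2], ![0, 1, 7, 8, 9, 10, 11], {s(1, 7)}⟩,
    ⟨![6, 5, 4, 3, 2], ![0, 1, 8, 9, 10, 11, 12], {s(1, 8)}⟩,
    ⟨![6, 5, 4, 3, 2], ![0, 1, 11, 10, 9, 8, 7], {s(1, 11)}⟩,
    ⟨![6, 5, 4, 3, 2], ![0, 1, 12, 11, 10, 9, 8], {s(1, 12)}⟩,
    ⟨![6, 7, 8, 9, 10], ![12, 11, 4, 3, 2, 1, 0], {s(4, 11)}⟩,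
    ⟨![6, 7, 8, 9, 10], ![12, 11, 5, 4, 3, 2, 1], {s(5, 11)}⟩,
    ⟨![6, 7, 8, 9, 10], ![11, 12, 4, 3, 2, 1, 0], {s(4, 12)}⟩,
    ⟨![6, 7, 8, 9, 10], ![11, 12, 5, 4, 3, 2, 1], {s(5, 12)}⟩]

open AnchoredCertificate in
theorem card_edgeFinset_le_of_not_hasAnchoredP5P7 {H : SimpleGraph (Fin 13)} [DecidableRel H.Adj]
    (hpath : pathGraph 13 ≤ H) {j : Fin 13} (hfree : ¬H.HasAnchoredP5P7 j) :
    #H.edgeFinset ≤ 68 := by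
  wlog hj : j ≤ 6 generalizing H j
  · classical
    rw [← (Iso.comap Fin.revPerm H).card_edgeFinset_eq]
    have hpath_rev : pathGraph 13 ≤ H.comap Fin.rev :=
      (comap_rev_pathGraph 13).ge.trans (comap_monotone Fin.revPerm.toEmbedding hpath)
    refine this hpath_rev (j := j.rev) (fun h => hfree ?_) ?_
    · simpa using h.of_comap Fin.rev_injective
    · simp only [not_le, Fin.le_def, Fin.val_rev] at hj ⊢
      omega
  have not_isAnchoredP5P7 (a : Fin 5 → Fin 13) (b : Fin 7 → Fin 13) :
      ¬(pathGraph 13).IsAnchoredP5P7 j a b :=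
    fun h => hfree (HasAnchoredP5P7.mono hpath ⟨a, b, h⟩)
  fin_cases j
  · exact (not_isAnchoredP5P7 ![0, 1, 2, 3, 4] ![6, 7, 8, 9, 10, 11, 12] (by decide)).elim
  · exact (not_isAnchoredP5P7 ![1, 2, 3, 4, 5] ![6, 7, 8, 9, 10, 11, 12] (by decide)).elim
  · exact (card_edgeFinset_le hpath hfree certificatesAtTwo (by decide) (by decide)).trans
      (by decide)
  · exact (card_edgeFinset_le hpath hfree certificatesAtThree (by decide) (by decide)).trans
      (by decide)
  · exact (not_isAnchoredP5P7 ![4, 3, 2, 1, 0] ![5, 6, 7, 8, 9, 10, 11] (by decide)).elim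
  · exact (not_isAnchoredP5P7 ![5, 4, 3, 2, 1] ![6, 7, 8, 9, 10, 11, 12] (by decide)).elim
  · exact (card_edgeFinset_le hpath hfree certificatesAtSix (by decide) (by decide)).trans
      (by decide)
  all_goals exact absurd hj (by decide)

end SimpleGraph

theorem stmt12_general {V : Type*} (G : SimpleGraph V) (hfree : ¬ Contains TwoP7 G)
    (x : Fin 13 → V) (hinj : Function.Injective x)
    (hpath : ∀ i : Fin 12, G.Adj (x i.castSucc) (x i.succ))
    (hy : ∃ y, y ∉ Set.range x ∧ (∃ z, z ∉ Set.range x ∧ G.Adj y z) ∧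
      ({v : V | v ∈ Set.range x ∧ G.Adj y v}).ncard = 1) :
    ({e : Sym2 V | e ∈ G.edgeSet ∧ ∀ v ∈ e, v ∈ Set.range x}).ncard ≤ 68 := by
  classical
  obtain ⟨y, hy, ⟨z, hz, hyz⟩, hone⟩ := hy
  obtain ⟨_, ⟨j, rfl⟩, hyj⟩ := Set.nonempty_of_ncard_ne_zero (hone ▸ one_ne_zero)
  refine (ncard_edges_in_range_le_ncard_edgeSet_comap x).trans ?_
  rw [← coe_edgeFinset, Set.ncard_coe_finset]
  exact card_edgeFinset_le_of_not_hasAnchoredP5P7 (IsWalkTuple.pathGraph_le_comap hpath)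
    fun h => hfree (contains_twoP7_of_hasAnchoredP5P7_comap hinj hyz.symm hyj hy hz h)

/-- Fact 3: if a non-isolated vertex of `G - P₁₃` hits exactly one vertex of the path, then there are at most 68 edges with both endpoints on the path. -/
theorem stmt12 {V : Type*} [Fintype V] (G : SimpleGraph V) (hfree : ¬ Contains TwoP7 G)
    (x : Fin 13 → V) (hinj : Function.Injective x)
    (hpath : ∀ i : Fin 12, G.Adj (x i.castSucc) (x i.succ))
    (hy : ∃ y, y ∉ Set.range x ∧ (∃ z, z ∉ Set.range x ∧ G.Adj y z) ∧
      ({v : V | v ∈ Set.range x ∧ G.Adj y v}).ncard = 1) :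
    ({e : Sym2 V | e ∈ G.edgeSet ∧ ∀ v ∈ e, v ∈ Set.range x}).ncard ≤ 68 :=
  stmt12_general G hfree x hinj hpath hy
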